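/- Let (f_x)_{x∈[a,b]} be a channel on [a,b] with continuity modulus ξ_Δ, let Λ : [a,b] × [a,b] → [0,∞) be a measurable loss function with Λ_max = sup Λ < ∞ and modulus λ(Δ), and let g : ℝ → [a,b] be measurable. Let Δ > 0, let P be a Borel probability measure on [a,b] and P^Δ its Δ-quantization. Then | ∫_{[a,b]} ∫_ℝ Λ(x, g(y)) f_x(y) dy dP^Δ(x) − ∫_{[a,b]} ∫_ℝ Λ(x, g(y)) f_x(y) dy dP(x) | ≤ ξ_Δ·Λ_max + λ(Δ)·(1 + ξ_Δ). -/

import Mathlib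

/-!
Let `H(x) = ∫ Λ(x, g y) f_x(y) dy` be the expected loss at input `x`. For inputs `x, x'` at
distance at most `Δ`, split `H(x) - H(x')` into the change of the loss integrated against `f_x`
(at most `λ(Δ)`) and the change of the density integrated against a loss bounded by `Λ_max`
(at most `Λ_max ξ_Δ`). The quantization `P^Δ` moves the `P`-mass of each cell of the grid to a
point of that cell within distance `Δ`, so the two expectations of `H` differ by at most
`λ(Δ) + Λ_max ξ_Δ ≤ ξ_Δ Λ_max + λ(Δ)(1 + ξ_Δ)`.
-/

open MeasureTheory

/-- The continuity modulus of a channel: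
`ξ_Δ = sup { ∫ |f_x − f_{x'}| : x, x' ∈ [a,b], |x − x'| ≤ Δ }`. -/
noncomputable def channelMod (a b : ℝ) (F : ℝ → ℝ → ℝ) (Δ : ℝ) : ℝ :=
  sSup {r : ℝ | ∃ x ∈ Set.Icc a b, ∃ x' ∈ Set.Icc a b, |x - x'| ≤ Δ ∧
    r = ∫ y : ℝ, |F x y - F x' y|}

/-- The modulus of continuity of a loss function in its first argument. -/
noncomputable def lossMod (a b : ℝ) (Λ : ℝ → ℝ → ℝ) (Δ : ℝ) : ℝ :=
  sSup {r : ℝ | ∃ xhat ∈ Set.Icc a b, ∃ x ∈ Set.Icc a b, ∃ x' ∈ Set.Icc a b,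
    |x - x'| ≤ Δ ∧ r = |Λ x xhat - Λ x' xhat|}

/-- The `Δ`-quantization of a Borel (probability) measure `P` on `[a,b]`: the discrete
measure putting mass `P({a})` at `a = a₀`, mass `P((a_{i−1}, a_i])` at `a_i = a + iΔ` for
`i = 1, …, ⌊(b−a)/Δ⌋`, and the mass of the remaining final cell at `b`. -/
noncomputable def quantMeasure (P : Measure ℝ) (a b Δ : ℝ) : Measure ℝ :=
  P {a} • Measure.dirac a
    + ∑ i ∈ Finset.range (Nat.floor ((b - a) / Δ)),
        P (Set.Ioc (a + (i : ℝ) * Δ) (a + ((i : ℝ) + 1) * Δ)) •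
          Measure.dirac (a + ((i : ℝ) + 1) * Δ)
    + P (Set.Ioc (a + (Nat.floor ((b - a) / Δ) : ℝ) * Δ) b) • Measure.dirac b

open Set Function

section QuantizationError

variable {α : Type*} [MeasurableSpace α] {μ : Measure α}

theorem abs_integral_mul_le_mul_integral_abs {φ f : α → ℝ} {c : ℝ} (hf : Integrable f μ)
    (hφ : ∀ x, |φ x| ≤ c) : |∫ x, φ x * f x ∂μ| ≤ c * ∫ x, |f x| ∂μ := by
  rw [← integral_const_mul, ← Real.norm_eq_abs]
  refine norm_integral_le_of_norm_le (hf.abs.const_mul c) (ae_of_all _ fun x => ?_)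
  rw [Real.norm_eq_abs, abs_mul]
  exact mul_le_mul_of_nonneg_right (hφ x) (abs_nonneg _)

theorem abs_integral_mul_sub_integral_mul_le {ℓ ℓ' f f' : α → ℝ} {L M : ℝ}
    (hℓ : AEStronglyMeasurable ℓ μ) (hℓ' : AEStronglyMeasurable ℓ' μ)
    (hL : ∀ x, |ℓ x - ℓ' x| ≤ L) (hM : ∀ x, |ℓ' x| ≤ M)
    (hf : Integrable f μ) (hf' : Integrable f' μ) :
    |∫ x, ℓ x * f x ∂μ - ∫ x, ℓ' x * f' x ∂μ|
      ≤ L * ∫ x, |f x| ∂μ + M * ∫ x, |f x - f' x| ∂μ := by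
  have hdiff : Integrable (fun x => (ℓ x - ℓ' x) * f x) μ :=
    hf.bdd_mul (hℓ.sub hℓ') (ae_of_all _ hL)
  have hℓ'f : Integrable (fun x => ℓ' x * f x) μ := hf.bdd_mul hℓ' (ae_of_all _ hM)
  have hℓ'f' : Integrable (fun x => ℓ' x * f' x) μ := hf'.bdd_mul hℓ' (ae_of_all _ hM)
  have hsplit : ∫ x, ℓ x * f x ∂μ - ∫ x, ℓ' x * f' x ∂μ
      = ∫ x, (ℓ x - ℓ' x) * f x ∂μ + ∫ x, ℓ' x * (f x - f' x) ∂μ := by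
    simp_rw [mul_sub]
    rw [integral_sub hℓ'f hℓ'f', ← add_sub_assoc, ← integral_add hdiff hℓ'f]
    simp_rw [sub_mul, sub_add_cancel]
  rw [hsplit]
  exact (abs_add_le _ _).trans (add_le_add (abs_integral_mul_le_mul_integral_abs hf hL)
    (abs_integral_mul_le_mul_integral_abs (hf.sub hf') hM))

theorem abs_measureReal_mul_sub_setIntegral_le [IsFiniteMeasure μ] {H : α → ℝ} {s : Set α}
    (hH : IntegrableOn H s μ) {p : α} {B : ℝ} (hB : ∀ x ∈ s, |H p - H x| ≤ B) :
    |μ.real s * H p - ∫ x in s, H x ∂μ| ≤ μ.real s * B := by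
  rw [← smul_eq_mul, ← setIntegral_const, ← integral_sub (integrable_const _) hH]
  simpa only [mul_comm B, Real.norm_eq_abs] using
    norm_setIntegral_le_of_norm_le_const (f := fun x => H p - H x) (measure_lt_top μ s) hB

theorem integral_eq_sum_setIntegral {ι : Type*} {s : Finset ι} {C : ι → Set α}
    (hCm : ∀ i ∈ s, MeasurableSet (C i)) (hCd : (s : Set ι).PairwiseDisjoint C)
    (hcover : ∀ᵐ x ∂μ, x ∈ ⋃ i ∈ s, C i) {H : α → ℝ} (hH : Integrable H μ) :
    ∫ x, H x ∂μ = ∑ i ∈ s, ∫ x in C i, H x ∂μ := by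
  rw [← integral_biUnion_finset s hCm hCd fun i _ => hH.integrableOn,
    Measure.restrict_eq_self_of_ae_mem hcover]

theorem abs_integral_sum_smul_dirac_sub_integral_le [MeasurableSingletonClass α]
    [IsProbabilityMeasure μ] {ι : Type*} {s : Finset ι} {C : ι → Set α} {p : ι → α}
    (hCm : ∀ i ∈ s, MeasurableSet (C i)) (hCd : (s : Set ι).PairwiseDisjoint C)
    (hcover : ∀ᵐ x ∂μ, x ∈ ⋃ i ∈ s, C i) {H : α → ℝ} (hH : Integrable H μ) {B : ℝ}
    (hB : ∀ i ∈ s, ∀ x ∈ C i, |H (p i) - H x| ≤ B) :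
    |∫ x, H x ∂(∑ i ∈ s, μ (C i) • Measure.dirac (p i)) - ∫ x, H x ∂μ| ≤ B := by
  have hmass : ∑ i ∈ s, μ.real (C i) = 1 := by
    simpa using (integral_eq_sum_setIntegral hCm hCd hcover (integrable_const (1 : ℝ))).symm
  have hQ : ∫ x, H x ∂(∑ i ∈ s, μ (C i) • Measure.dirac (p i))
      = ∑ i ∈ s, μ.real (C i) * H (p i) := by
    rw [integral_finsetSum_measure fun i _ =>
      (integrable_dirac enorm_lt_top).smul_measure (measure_ne_top μ _)]
    simp only [integral_smul_measure, integral_dirac, smul_eq_mul, measureReal_def]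
  rw [hQ, integral_eq_sum_setIntegral hCm hCd hcover hH, ← Finset.sum_sub_distrib]
  calc |∑ i ∈ s, (μ.real (C i) * H (p i) - ∫ x in C i, H x ∂μ)|
      ≤ ∑ i ∈ s, μ.real (C i) * B :=
        (Finset.abs_sum_le_sum_abs _ _).trans <| Finset.sum_le_sum fun i hi =>
          abs_measureReal_mul_sub_setIntegral_le hH.integrableOn (hB i hi)
    _ = B := by rw [← Finset.sum_mul, hmass, one_mul]

end QuantizationError

section Moduli

variable {a b Δ : ℝ}

theorem integral_abs_sub_le_channelMod {F : ℝ → ℝ → ℝ}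
    (hFnn : ∀ x ∈ Icc a b, ∀ y, 0 ≤ F x y) (hFprob : ∀ x ∈ Icc a b, ∫ y, F x y = 1)
    {x x' : ℝ} (hx : x ∈ Icc a b) (hx' : x' ∈ Icc a b) (hxx' : |x - x'| ≤ Δ) :
    ∫ y, |F x y - F x' y| ≤ channelMod a b F Δ := by
  refine le_csSup ⟨2, ?_⟩ ⟨x, hx, x', hx', hxx', rfl⟩
  rintro r ⟨x, hx, x', hx', -, rfl⟩
  have hint : ∀ x ∈ Icc a b, Integrable (F x) := fun x hx =>
    integrable_of_integral_eq_one (hFprob x hx)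
  calc ∫ y, |F x y - F x' y| ≤ ∫ y, (F x y + F x' y) :=
        integral_mono ((hint x hx).sub (hint x' hx')).abs ((hint x hx).add (hint x' hx'))
          fun y => abs_sub_le_iff.2 ⟨by linarith [hFnn x' hx' y], by linarith [hFnn x hx y]⟩
    _ = 2 := by rw [integral_add (hint x hx) (hint x' hx'), hFprob x hx, hFprob x' hx']; norm_num

theorem channelMod_nonneg {F : ℝ → ℝ → ℝ}
    (hFnn : ∀ x ∈ Icc a b, ∀ y, 0 ≤ F x y) (hFprob : ∀ x ∈ Icc a b, ∫ y, F x y = 1)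
    (hab : a ≤ b) (hΔ : 0 ≤ Δ) : 0 ≤ channelMod a b F Δ := by
  have ha := left_mem_Icc.2 hab
  simpa using integral_abs_sub_le_channelMod hFnn hFprob ha ha (by simpa using hΔ)

theorem abs_sub_le_lossMod {Λ : ℝ → ℝ → ℝ} {M : ℝ}
    (hΛnn : ∀ x ∈ Icc a b, ∀ z ∈ Icc a b, 0 ≤ Λ x z)
    (hΛM : ∀ x ∈ Icc a b, ∀ z ∈ Icc a b, Λ x z ≤ M)
    {x x' z : ℝ} (hx : x ∈ Icc a b) (hx' : x' ∈ Icc a b) (hz : z ∈ Icc a b)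
    (hxx' : |x - x'| ≤ Δ) : |Λ x z - Λ x' z| ≤ lossMod a b Λ Δ := by
  refine le_csSup ⟨M, ?_⟩ ⟨z, hz, x, hx, x', hx', hxx', rfl⟩
  rintro r ⟨z, hz, x, hx, x', hx', -, rfl⟩
  exact abs_sub_le_of_nonneg_of_le (hΛnn x hx z hz) (hΛM x hx z hz)
    (hΛnn x' hx' z hz) (hΛM x' hx' z hz)

theorem lossMod_nonneg {Λ : ℝ → ℝ → ℝ} {M : ℝ}
    (hΛnn : ∀ x ∈ Icc a b, ∀ z ∈ Icc a b, 0 ≤ Λ x z)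
    (hΛM : ∀ x ∈ Icc a b, ∀ z ∈ Icc a b, Λ x z ≤ M)
    (hab : a ≤ b) (hΔ : 0 ≤ Δ) : 0 ≤ lossMod a b Λ Δ := by
  have ha := left_mem_Icc.2 hab
  exact (abs_nonneg _).trans (abs_sub_le_lossMod hΛnn hΛM ha ha ha (by simpa using hΔ))

end Moduli

section ExpectedLoss

variable {a b : ℝ} {F Λ : ℝ → ℝ → ℝ} {g : ℝ → ℝ}

noncomputable def expectedLoss (F Λ : ℝ → ℝ → ℝ) (g : ℝ → ℝ) (x : ℝ) : ℝ :=
  ∫ y, Λ x (g y) * F x y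

theorem stronglyMeasurable_expectedLoss (hF : Measurable (uncurry F))
    (hΛ : Measurable (uncurry Λ)) (hg : Measurable g) :
    StronglyMeasurable (expectedLoss F Λ g) :=
  ((hΛ.comp (measurable_fst.prodMk (hg.comp measurable_snd))).mul hF).stronglyMeasurable
    |>.integral_prod_right

theorem abs_expectedLoss_le {M : ℝ}
    (hFnn : ∀ x ∈ Icc a b, ∀ y, 0 ≤ F x y) (hFprob : ∀ x ∈ Icc a b, ∫ y, F x y = 1)
    (hΛnn : ∀ x ∈ Icc a b, ∀ z ∈ Icc a b, 0 ≤ Λ x z)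
    (hΛM : ∀ x ∈ Icc a b, ∀ z ∈ Icc a b, Λ x z ≤ M) (hg : ∀ y, g y ∈ Icc a b)
    {x : ℝ} (hx : x ∈ Icc a b) : |expectedLoss F Λ g x| ≤ M := by
  have h := abs_integral_mul_le_mul_integral_abs (μ := volume) (φ := fun y => Λ x (g y))
    (integrable_of_integral_eq_one (hFprob x hx))
    fun y => (abs_of_nonneg (hΛnn x hx _ (hg y))).trans_le (hΛM x hx _ (hg y))
  simpa only [expectedLoss, abs_of_nonneg (hFnn x hx _), hFprob x hx, mul_one] using h

theorem abs_expectedLoss_sub_le {M Δ : ℝ}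
    (hFnn : ∀ x ∈ Icc a b, ∀ y, 0 ≤ F x y) (hFprob : ∀ x ∈ Icc a b, ∫ y, F x y = 1)
    (hΛ : Measurable (uncurry Λ)) (hΛnn : ∀ x ∈ Icc a b, ∀ z ∈ Icc a b, 0 ≤ Λ x z)
    (hΛM : ∀ x ∈ Icc a b, ∀ z ∈ Icc a b, Λ x z ≤ M)
    (hgm : Measurable g) (hg : ∀ y, g y ∈ Icc a b)
    {x x' : ℝ} (hx : x ∈ Icc a b) (hx' : x' ∈ Icc a b) (hxx' : |x - x'| ≤ Δ) :
    |expectedLoss F Λ g x - expectedLoss F Λ g x'|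
      ≤ lossMod a b Λ Δ + M * channelMod a b F Δ := by
  have hint : ∀ x ∈ Icc a b, Integrable (F x) := fun x hx =>
    integrable_of_integral_eq_one (hFprob x hx)
  have hM : 0 ≤ M := (hΛnn x hx x hx).trans (hΛM x hx x hx)
  have h := abs_integral_mul_sub_integral_mul_le
    (hΛ.of_uncurry_left.comp hgm).aestronglyMeasurable
    (hΛ.of_uncurry_left.comp hgm).aestronglyMeasurable
    (fun y => abs_sub_le_lossMod hΛnn hΛM hx hx' (hg y) hxx')
    (fun y => (abs_of_nonneg (hΛnn x' hx' _ (hg y))).trans_le (hΛM x' hx' _ (hg y)))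
    (hint x hx) (hint x' hx')
  simp only [abs_of_nonneg (hFnn x hx _), hFprob x hx, mul_one] at h
  exact h.trans (add_le_add_right (mul_le_mul_of_nonneg_left
    (integral_abs_sub_le_channelMod hFnn hFprob hx hx' hxx') hM) _)

theorem integrable_expectedLoss {M : ℝ} {P : Measure ℝ} [IsFiniteMeasure P]
    (hP : ∀ᵐ x ∂P, x ∈ Icc a b) (hF : Measurable (uncurry F))
    (hFnn : ∀ x ∈ Icc a b, ∀ y, 0 ≤ F x y) (hFprob : ∀ x ∈ Icc a b, ∫ y, F x y = 1)
    (hΛ : Measurable (uncurry Λ)) (hΛnn : ∀ x ∈ Icc a b, ∀ z ∈ Icc a b, 0 ≤ Λ x z)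
    (hΛM : ∀ x ∈ Icc a b, ∀ z ∈ Icc a b, Λ x z ≤ M) (hgm : Measurable g)
    (hg : ∀ y, g y ∈ Icc a b) : Integrable (expectedLoss F Λ g) P :=
  .of_bound (stronglyMeasurable_expectedLoss hF hΛ hgm).aestronglyMeasurable M <|
    hP.mono fun _ hx => abs_expectedLoss_le hFnn hFprob hΛnn hΛM hg hx

end ExpectedLoss

section Grid

variable {a b Δ : ℝ}

/-- The grid points `a + iΔ`, clipped at `b`; clipping turns the final remainder cell
`(a + ⌊(b - a)/Δ⌋Δ, b]` of `quantMeasure` into a cell `(x_N, x_{N+1}]` like the others. -/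
noncomputable def quantNode (a b Δ : ℝ) (i : ℕ) : ℝ := min (a + i * Δ) b

def quantCell (a b Δ : ℝ) : Option ℕ → Set ℝ
  | none => {a}
  | some i => Ioc (quantNode a b Δ i) (quantNode a b Δ (i + 1))

noncomputable def quantPoint (a b Δ : ℝ) : Option ℕ → ℝ
  | none => a
  | some i => quantNode a b Δ (i + 1)

theorem quantNode_zero (hab : a ≤ b) : quantNode a b Δ 0 = a := by
  simp [quantNode, hab]

theorem monotone_quantNode (hΔ : 0 ≤ Δ) : Monotone (quantNode a b Δ) := fun _ _ hij =>
  min_le_min_right b (add_le_add_right (mul_le_mul_of_nonneg_right (Nat.cast_le.2 hij) hΔ) a)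

theorem quantNode_mem_Icc (hab : a ≤ b) (hΔ : 0 ≤ Δ) (i : ℕ) : quantNode a b Δ i ∈ Icc a b :=
  ⟨le_min (le_add_of_nonneg_right (mul_nonneg (Nat.cast_nonneg _) hΔ)) hab, min_le_right _ _⟩

theorem quantNode_succ_sub_le (hΔ : 0 ≤ Δ) (i : ℕ) :
    quantNode a b Δ (i + 1) - quantNode a b Δ i ≤ Δ := by
  refine (le_abs_self _).trans ((abs_min_sub_min_le_max _ _ _ _).trans ?_)
  simp [abs_of_nonneg hΔ, add_mul, hΔ]

theorem quantNode_of_le_floor (hab : a ≤ b) (hΔ : 0 < Δ) {i : ℕ} (hi : i ≤ ⌊(b - a) / Δ⌋₊) :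
    quantNode a b Δ i = a + i * Δ := by
  refine min_eq_left ?_
  have := (Nat.le_floor_iff (div_nonneg (sub_nonneg.2 hab) hΔ.le)).1 hi
  rw [le_div_iff₀ hΔ] at this
  linarith

theorem quantNode_floor_add_one (hΔ : 0 < Δ) : quantNode a b Δ (⌊(b - a) / Δ⌋₊ + 1) = b := by
  refine min_eq_right ?_
  have := (div_lt_iff₀ hΔ).1 (Nat.lt_floor_add_one ((b - a) / Δ))
  push_cast
  linarith

theorem quantMeasure_eq_sum (P : Measure ℝ) (hab : a ≤ b) (hΔ : 0 < Δ) :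
    quantMeasure P a b Δ = ∑ i ∈ Finset.insertNone (Finset.range (⌊(b - a) / Δ⌋₊ + 1)),
      P (quantCell a b Δ i) • Measure.dirac (quantPoint a b Δ i) := by
  rw [Finset.sum_insertNone, Finset.sum_range_succ, ← add_assoc]
  simp only [quantCell, quantPoint]
  rw [quantNode_floor_add_one hΔ, quantNode_of_le_floor hab hΔ le_rfl]
  refine congrArg₂ (· + ·) (congrArg₂ (· + ·) rfl (Finset.sum_congr rfl fun i hi => ?_)) rfl
  have hi := Finset.mem_range.1 hi
  rw [quantNode_of_le_floor hab hΔ hi.le, quantNode_of_le_floor hab hΔ hi]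
  push_cast
  rfl

theorem pairwise_disjoint_quantCell (hab : a ≤ b) (hΔ : 0 ≤ Δ) :
    Pairwise (Disjoint on quantCell a b Δ) := by
  have ha : ∀ i, a ∉ quantCell a b Δ (some i) := fun i h =>
    h.1.not_ge (quantNode_mem_Icc hab hΔ i).1
  rintro (_ | i) (_ | j) hij
  · exact absurd rfl hij
  · exact disjoint_singleton_left.2 (ha j)
  · exact disjoint_singleton_right.2 (ha i)
  · exact (monotone_quantNode hΔ).pairwise_disjoint_on_Ioc_succ
      ((Option.some_injective _).ne_iff.1 hij)

theorem Icc_subset_biUnion_quantCell (hab : a ≤ b) (hΔ : 0 < Δ) :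
    Icc a b ⊆
      ⋃ i ∈ Finset.insertNone (Finset.range (⌊(b - a) / Δ⌋₊ + 1)), quantCell a b Δ i := by
  rw [← Ioc_insert_left hab]
  rintro y (rfl | hy)
  · exact mem_biUnion (Finset.mem_insertNone.2 fun _ h => (Option.some_ne_none _ h.symm).elim) rfl
  have hy' : y ∈ Ioc (quantNode a b Δ 0) (quantNode a b Δ (⌊(b - a) / Δ⌋₊ + 1)) := by
    rwa [quantNode_zero hab, quantNode_floor_add_one hΔ]
  obtain ⟨i, hi, hy⟩ := mem_iUnion₂.1 (Ioc_subset_biUnion_Ioc _ _ hy')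
  exact mem_biUnion (Finset.mem_insertNone.2 fun j hj => Option.some_injective _ hj ▸ hi) hy

theorem measurableSet_quantCell (i : Option ℕ) : MeasurableSet (quantCell a b Δ i) := by
  cases i
  exacts [measurableSet_singleton a, measurableSet_Ioc]

theorem quantCell_subset_Icc (hab : a ≤ b) (hΔ : 0 ≤ Δ) (i : Option ℕ) :
    quantCell a b Δ i ⊆ Icc a b := by
  cases i with
  | none => exact singleton_subset_iff.2 (left_mem_Icc.2 hab)
  | some i =>
    exact Ioc_subset_Icc_self.trans
      (Icc_subset_Icc (quantNode_mem_Icc hab hΔ i).1 (quantNode_mem_Icc hab hΔ _).2)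

theorem quantPoint_mem_Icc (hab : a ≤ b) (hΔ : 0 ≤ Δ) (i : Option ℕ) :
    quantPoint a b Δ i ∈ Icc a b := by
  cases i
  exacts [left_mem_Icc.2 hab, quantNode_mem_Icc hab hΔ _]

theorem abs_quantPoint_sub_le (hΔ : 0 ≤ Δ) {i : Option ℕ} {y : ℝ}
    (hy : y ∈ quantCell a b Δ i) : |quantPoint a b Δ i - y| ≤ Δ := by
  cases i with
  | none =>
    obtain rfl := mem_singleton_iff.1 hy
    simpa [quantPoint] using hΔ
  | some i =>
    have h := quantNode_succ_sub_le (a := a) (b := b) hΔ i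
    simp only [quantPoint]
    exact abs_le.2 ⟨by linarith [hy.2], by linarith [hy.1]⟩

end Grid

theorem expected_loss_quantization_bound_general
    (a b : ℝ)
    -- the channel
    (F : ℝ → ℝ → ℝ)
    (hFmeas : Measurable (Function.uncurry F))
    (hFnn : ∀ x ∈ Set.Icc a b, ∀ y : ℝ, 0 ≤ F x y)
    (hFprob : ∀ x ∈ Set.Icc a b, ∫ y : ℝ, F x y = 1)
    -- the loss function and its supremum
    (Λ : ℝ → ℝ → ℝ) (hΛmeas : Measurable (Function.uncurry Λ))
    (hΛnn : ∀ x ∈ Set.Icc a b, ∀ x' ∈ Set.Icc a b, 0 ≤ Λ x x')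
    (Λmax : ℝ)
    (hΛmax : IsLUB (Set.image2 Λ (Set.Icc a b) (Set.Icc a b)) Λmax)
    -- the denoising rule
    (g : ℝ → ℝ) (hgmeas : Measurable g) (hgr : ∀ y : ℝ, g y ∈ Set.Icc a b)
    -- the quantization resolution and the input distribution
    (Δ : ℝ) (hΔ : 0 < Δ)
    (P : Measure ℝ) [IsProbabilityMeasure P] (hPsupp : P (Set.Icc a b)ᶜ = 0) :
    |(∫ x, (∫ y : ℝ, Λ x (g y) * F x y) ∂(quantMeasure P a b Δ))
        - ∫ x, (∫ y : ℝ, Λ x (g y) * F x y) ∂P|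
      ≤ channelMod a b F Δ * Λmax
        + lossMod a b Λ Δ * (1 + channelMod a b F Δ) := by
  have hP : ∀ᵐ x ∂P, x ∈ Icc a b := ae_iff.2 hPsupp
  obtain ⟨x₀, hx₀⟩ := hP.exists
  have hab : a ≤ b := hx₀.1.trans hx₀.2
  have hΛM : ∀ x ∈ Icc a b, ∀ z ∈ Icc a b, Λ x z ≤ Λmax := fun x hx z hz =>
    hΛmax.1 (mem_image2_of_mem hx hz)
  have key := abs_integral_sum_smul_dirac_sub_integral_le (p := quantPoint a b Δ)
    (fun i _ => measurableSet_quantCell i)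
    ((pairwise_disjoint_quantCell hab hΔ.le).set_pairwise _)
    (hP.mono fun _ hx => Icc_subset_biUnion_quantCell hab hΔ hx)
    (integrable_expectedLoss hP hFmeas hFnn hFprob hΛmeas hΛnn hΛM hgmeas hgr)
    fun i _ y hy => abs_expectedLoss_sub_le hFnn hFprob hΛmeas hΛnn hΛM hgmeas hgr
      (quantPoint_mem_Icc hab hΔ.le i) (quantCell_subset_Icc hab hΔ.le i hy)
      (abs_quantPoint_sub_le hΔ.le hy)
  rw [← quantMeasure_eq_sum P hab hΔ] at key
  have hξ := channelMod_nonneg hFnn hFprob hab hΔ.le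
  have hL := lossMod_nonneg hΛnn hΛM hab hΔ.le
  calc _ ≤ lossMod a b Λ Δ + Λmax * channelMod a b F Δ := key
    _ ≤ _ := by nlinarith [mul_nonneg hL hξ]

/-- Quantization continuity of the expected loss: the expected loss
under the `Δ`-quantization `P^Δ` of an input distribution `P` differs from the expected
loss under `P` by at most `ξ_Δ Λ_max + λ(Δ)(1 + ξ_Δ)`. -/
theorem expected_loss_quantization_bound
    (a b : ℝ) (hab : a < b)
    -- the channel
    (F : ℝ → ℝ → ℝ)
    (hFmeas : Measurable (Function.uncurry F))
    (hFnn : ∀ x ∈ Set.Icc a b, ∀ y : ℝ, 0 ≤ F x y)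
    (hFprob : ∀ x ∈ Set.Icc a b, ∫ y : ℝ, F x y = 1)
    -- the loss function and its supremum
    (Λ : ℝ → ℝ → ℝ) (hΛmeas : Measurable (Function.uncurry Λ))
    (hΛnn : ∀ x ∈ Set.Icc a b, ∀ x' ∈ Set.Icc a b, 0 ≤ Λ x x')
    (Λmax : ℝ)
    (hΛmax : IsLUB (Set.image2 Λ (Set.Icc a b) (Set.Icc a b)) Λmax)
    -- the denoising rule
    (g : ℝ → ℝ) (hgmeas : Measurable g) (hgr : ∀ y : ℝ, g y ∈ Set.Icc a b)
    -- the quantization resolution and the input distribution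
    (Δ : ℝ) (hΔ : 0 < Δ)
    (P : Measure ℝ) [IsProbabilityMeasure P] (hPsupp : P (Set.Icc a b)ᶜ = 0) :
    |(∫ x, (∫ y : ℝ, Λ x (g y) * F x y) ∂(quantMeasure P a b Δ))
        - ∫ x, (∫ y : ℝ, Λ x (g y) * F x y) ∂P|
      ≤ channelMod a b F Δ * Λmax
        + lossMod a b Λ Δ * (1 + channelMod a b F Δ) :=
  expected_loss_quantization_bound_general a b F hFmeas hFnn hFprob Λ hΛmeas hΛnn Λmax hΛmax g
    hgmeas hgr Δ hΔ P hPsupp
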